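/- arXiv:2512.07336 — 2 statements merged into one kernel-verified Lean document; each statement's English description precedes it below -/
import Mathlib

section
/- Translation formula for symmetric coefficients: Let y_1, ..., y_{n-1} be elements of a commutative ring and z another ring element. Let e_k denote the elementary symmetric polynomial of degree k in y_1, ..., y_{n-1}, and let e'_k denote the elementary symmetric polynomial of degree k in y_1 + z, ..., y_{n-1} + z. Then for every 0 ≤ k ≤ n−1, e'_k = ∑_{i=0}^{k} binom(n−1−k+i, i) · e_{k−i} · z^i. -/
open Finset

lemma count_supsets {α : Type*} [DecidableEq α] [Fintype α] (S : Finset α) (k : ℕ)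
    (h : S.card ≤ k) :
    ((Finset.powersetCard k (Finset.univ : Finset α)).filter (fun T => S ⊆ T)).card
      = (Fintype.card α - S.card).choose (k - S.card) := by
  rw [← Finset.card_compl S, ← Finset.card_powersetCard (k - S.card) Sᶜ]
  apply Finset.card_nbij' (fun T => T \ S) (fun U => U ∪ S)
  · intro T hT
    simp only [Finset.mem_coe, Finset.mem_filter, Finset.mem_powersetCard] at hT
    obtain ⟨⟨-, hcard⟩, hsub⟩ := hT
    simp only [Finset.mem_coe, Finset.mem_powersetCard]
    constructor
    · intro x hx
      simp only [Finset.mem_sdiff] at hx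
      simp [hx.2]
    · rw [Finset.card_sdiff_of_subset hsub, hcard]
  · intro U hU
    simp only [Finset.mem_coe, Finset.mem_powersetCard] at hU
    obtain ⟨hsub, hcard⟩ := hU
    have hdisj : Disjoint U S := by
      rw [Finset.disjoint_left]
      intro x hx
      have := hsub hx
      simp only [Finset.mem_compl] at this
      exact this
    simp only [Finset.mem_coe, Finset.mem_filter, Finset.mem_powersetCard]
    refine ⟨⟨Finset.subset_univ _, ?_⟩, Finset.subset_union_right⟩
    rw [Finset.card_union_of_disjoint hdisj, hcard]
    have := S.card_le_univ
    omega
  · intro T hT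
    simp only [Finset.mem_coe, Finset.mem_filter] at hT
    exact Finset.sdiff_union_of_subset hT.2
  · intro U hU
    simp only [Finset.mem_coe, Finset.mem_powersetCard] at hU
    have hdisj : Disjoint U S := by
      rw [Finset.disjoint_left]
      intro x hx
      have := hU.1 hx
      simp only [Finset.mem_compl] at this
      exact this
    exact Finset.union_sdiff_cancel_right hdisj

/-- Translation formula for elementary symmetric polynomials: if `e_k` denotes the
degree-`k` elementary symmetric polynomial in `y_1, …, y_{n-1}` and `e'_k` the one
in the shifted variables `y_i + z`, then
`e'_k = ∑_{i=0}^{k} binom(n-1-k+i, i) e_{k-i} z^i`. -/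
theorem esymm_translation {R : Type*} [CommRing R] (n : ℕ) (y : Fin (n - 1) → R)
    (z : R) (k : ℕ) (hk : k ≤ n - 1) :
    (∑ T ∈ Finset.powersetCard k (Finset.univ : Finset (Fin (n - 1))),
        ∏ i ∈ T, (y i + z))
      = ∑ i ∈ Finset.range (k + 1),
          ((n - 1 - k + i).choose i : R) *
            (∑ T ∈ Finset.powersetCard (k - i) (Finset.univ : Finset (Fin (n - 1))),
              ∏ jj ∈ T, y jj) * z ^ i := by
  have hcard : Fintype.card (Fin (n - 1)) = n - 1 := Fintype.card_fin _
  calc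
    (∑ T ∈ Finset.powersetCard k (Finset.univ : Finset (Fin (n - 1))),
        ∏ i ∈ T, (y i + z))
        = ∑ T ∈ Finset.powersetCard k (Finset.univ : Finset (Fin (n - 1))),
            ∑ S ∈ (Finset.univ : Finset (Fin (n - 1))).powerset,
              if S ⊆ T then (∏ i ∈ S, y i) * z ^ (k - S.card) else 0 := by
      refine Finset.sum_congr rfl fun T hT => ?_
      simp only [Finset.mem_powersetCard] at hT
      rw [Finset.prod_add]
      rw [show T.powerset = (Finset.univ : Finset (Fin (n - 1))).powerset.filter (· ⊆ T) by
        ext S; simp]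
      rw [Finset.sum_filter]
      refine Finset.sum_congr rfl fun S hS => ?_
      split_ifs with h
      · rw [Finset.prod_const, Finset.card_sdiff_of_subset h, hT.2]
      · rfl
    _ = ∑ S ∈ (Finset.univ : Finset (Fin (n - 1))).powerset,
          (((Finset.powersetCard k (Finset.univ : Finset (Fin (n - 1)))).filter
              (fun T => S ⊆ T)).card : R) * ((∏ i ∈ S, y i) * z ^ (k - S.card)) := by
      rw [Finset.sum_comm]
      refine Finset.sum_congr rfl fun S _ => ?_
      rw [← Finset.sum_filter, Finset.sum_const, nsmul_eq_mul]
    _ = ∑ S ∈ (Finset.univ : Finset (Fin (n - 1))).powerset,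
          (if S.card ≤ k then ((n - 1 - S.card).choose (k - S.card) : R) else 0) *
            ((∏ i ∈ S, y i) * z ^ (k - S.card)) := by
      refine Finset.sum_congr rfl fun S _ => ?_
      split_ifs with h
      · rw [count_supsets S k h, hcard]
      · have : (Finset.powersetCard k (Finset.univ : Finset (Fin (n - 1)))).filter
            (fun T => S ⊆ T) = ∅ := by
          rw [Finset.filter_eq_empty_iff]
          intro T hT hST
          simp only [Finset.mem_powersetCard] at hT
          exact h (hT.2 ▸ Finset.card_le_card hST)
        rw [this]
        simp
    _ = ∑ c ∈ Finset.range (n - 1 + 1),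
          (if c ≤ k then ((n - 1 - c).choose (k - c) : R) else 0) *
            ((∑ S ∈ Finset.powersetCard c (Finset.univ : Finset (Fin (n - 1))),
              ∏ i ∈ S, y i) * z ^ (k - c)) := by
      rw [Finset.sum_powerset]
      rw [Finset.card_univ, hcard]
      refine Finset.sum_congr rfl fun c _ => ?_
      conv_rhs => rw [Finset.sum_mul, Finset.mul_sum]
      refine Finset.sum_congr rfl fun S hS => ?_
      have hc : S.card = c := (Finset.mem_powersetCard.1 hS).2
      rw [hc]
    _ = ∑ c ∈ Finset.range (k + 1),
          ((n - 1 - c).choose (k - c) : R) *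
            ((∑ S ∈ Finset.powersetCard c (Finset.univ : Finset (Fin (n - 1))),
              ∏ i ∈ S, y i) * z ^ (k - c)) := by
      simp only [ite_mul, zero_mul]
      rw [← Finset.sum_filter]
      apply Finset.sum_congr
      · ext c; simp only [Finset.mem_filter, Finset.mem_range]; omega
      · intro c _; rfl
    _ = ∑ i ∈ Finset.range (k + 1),
          ((n - 1 - k + i).choose i : R) *
            (∑ T ∈ Finset.powersetCard (k - i) (Finset.univ : Finset (Fin (n - 1))),
              ∏ jj ∈ T, y jj) * z ^ i := by
      rw [← Finset.sum_range_reflect]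
      refine Finset.sum_congr rfl fun i hi => ?_
      simp only [Finset.mem_range] at hi
      have h1 : k + 1 - 1 - i = k - i := by omega
      have h2 : n - 1 - (k - i) = n - 1 - k + i := by omega
      have h3 : k - (k - i) = i := by omega
      rw [h1, h2, h3, mul_assoc]
end

section
/- Generating function of the recursive sequence a_k: Define a_0 = 1, a_1 = 0, a_2 = −ζ(2), a_3 = 2ζ(3), and for k ≥ 4, a_k = (−1)^{k−1}(k−1)!ζ(k) + ∑_{i=1}^{k−3} (−1)^i binom(k−1, i) i! ζ(i+1) a_{k−1−i}. Then the exponential generating function A(z) = ∑_{k=0}^∞ (a_k/k!) z^k satisfies A(z) = exp(∑_{m=2}^∞ ((−1)^{m−1} ζ(m)/m) z^m) for |z| < 1. -/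
open Finset

/-- `ζ(m) = ∑_{k=1}^∞ 1/k^m` (the Riemann zeta function at integer `m ≥ 2`). -/
noncomputable def zetaNat (m : ℕ) : ℝ :=
  ∑' k : ℕ, (1 : ℝ) / ((k + 1 : ℕ) : ℝ) ^ m

private lemma zetaNat_nonneg (m : ℕ) : 0 ≤ zetaNat m :=
  tsum_nonneg fun k => by positivity

private lemma zetaNat_summable {m : ℕ} (hm : 2 ≤ m) :
    Summable (fun k : ℕ => (1 : ℝ) / ((k + 1 : ℕ) : ℝ) ^ m) := by
  have h2 : Summable (fun n : ℕ => (1 : ℝ) / (n : ℝ) ^ m) :=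
    Real.summable_one_div_nat_pow.mpr (by omega)
  exact (summable_nat_add_iff 1).mpr h2

private lemma zetaNat_two_eq : zetaNat 2 = Real.pi ^ 2 / 6 := by
  have h : HasSum (fun n : ℕ => (1 : ℝ) / ((n + 1 : ℕ) : ℝ) ^ 2) (Real.pi ^ 2 / 6) := by
    rw [hasSum_nat_add_iff (f := fun n : ℕ => (1:ℝ)/(n:ℝ)^2) 1]
    simpa using hasSum_zeta_two
  exact h.tsum_eq

private lemma zetaNat_le_two {m : ℕ} (hm : 2 ≤ m) : zetaNat m ≤ 2 := by
  have hle : zetaNat m ≤ zetaNat 2 := by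
    apply Summable.tsum_le_tsum _ (zetaNat_summable hm) (zetaNat_summable le_rfl)
    intro k
    have h1 : (1 : ℝ) ≤ ((k + 1 : ℕ) : ℝ) := by exact_mod_cast Nat.one_le_iff_ne_zero.mpr (by omega)
    have := pow_le_pow_right₀ h1 hm
    exact one_div_le_one_div_of_le (by positivity) this
  have : Real.pi ^ 2 / 6 ≤ 2 := by nlinarith [Real.pi_lt_d2, Real.pi_pos]
  rw [zetaNat_two_eq] at hle
  linarith

private lemma zetaNat_abs_le_two {m : ℕ} (hm : 2 ≤ m) : |zetaNat m| ≤ 2 := by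
  rw [abs_of_nonneg (zetaNat_nonneg m)]; exact zetaNat_le_two hm

private lemma sum_sq_le (n : ℕ) : ∑ j ∈ range n, ((j : ℝ) + 1) ^ 2 ≤ ((n : ℝ) + 1) ^ 3 / 3 := by
  induction n with
  | zero => norm_num
  | succ n ih =>
    rw [Finset.sum_range_succ]
    push_cast
    push_cast at ih
    nlinarith [ih, Nat.cast_nonneg (α := ℝ) n]

private lemma aux_rec (a : ℕ → ℝ)
    (harec : ∀ k : ℕ, 4 ≤ k →
      a k = (-1 : ℝ) ^ (k - 1) * ((k - 1).factorial : ℝ) * zetaNat k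
        + ∑ i ∈ Finset.Icc 1 (k - 3),
            (-1 : ℝ) ^ i * ((k - 1).choose i : ℝ) * (i.factorial : ℝ) *
              zetaNat (i + 1) * a (k - 1 - i))
    (c : ℕ → ℝ) (hcdef : c = fun k => a k / (k.factorial : ℝ))
    (hc0 : c 0 = 1) (hc1 : c 1 = 0) (hc2 : c 2 = -zetaNat 2 / 2) (hc3 : c 3 = zetaNat 3 / 3)
    (b : ℕ → ℝ) (hbdef : b = fun j => if j = 0 then 0 else (-1 : ℝ) ^ j * zetaNat (j + 1)) :
    ∀ n : ℕ, ((n : ℝ) + 1) * c (n + 1) = ∑ i ∈ range (n + 1), b i * c (n - i) := by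
  have hfact_ne : ∀ k : ℕ, ((k.factorial : ℕ) : ℝ) ≠ 0 :=
    fun k => Nat.cast_ne_zero.mpr k.factorial_ne_zero
  intro n
  match n with
  | 0 => simp [hbdef, hc1]
  | 1 =>
    rw [Finset.sum_range_succ, Finset.sum_range_succ, Finset.sum_range_zero]
    simp [hbdef, hc0, hc1, hc2]
    ring
  | 2 =>
    rw [Finset.sum_range_succ, Finset.sum_range_succ, Finset.sum_range_succ,
      Finset.sum_range_zero]
    simp [hbdef, hc0, hc1, hc3]
    ring
  | (m + 3) =>
    have H := harec (m + 4) (by omega)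
    rw [show m + 4 - 1 = m + 3 by omega, show m + 4 - 3 = m + 1 by omega] at H
    rw [← Finset.Ico_add_one_right_eq_Icc, Finset.sum_Ico_eq_sum_range] at H
    rw [show m + 1 + 1 - 1 = m + 1 by omega] at H
    have hterm : ∀ i ∈ range (m + 1),
        (-1 : ℝ) ^ (1 + i) * ((m + 3).choose (1 + i) : ℝ) * ((1 + i).factorial : ℝ) *
            zetaNat (1 + i + 1) * a (m + 3 - (1 + i))
          = ((m + 3).factorial : ℝ) * ((-1 : ℝ) ^ (i + 1) * zetaNat (i + 2) * c (m + 2 - i)) := by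
      intro i hi
      have him : i ≤ m := Nat.lt_succ_iff.mp (Finset.mem_range.mp hi)
      have hch : (m + 3).choose (1 + i) * (1 + i).factorial * (m + 2 - i).factorial
          = (m + 3).factorial := by
        have h := Nat.choose_mul_factorial_mul_factorial (show 1 + i ≤ m + 3 by omega)
        rwa [show m + 3 - (1 + i) = m + 2 - i by omega] at h
      have hcast : (((m + 3).choose (1 + i) : ℕ) : ℝ) * ((1 + i).factorial : ℝ) *
          ((m + 2 - i).factorial : ℝ) = ((m + 3).factorial : ℝ) := by exact_mod_cast hch
      rw [show m + 3 - (1 + i) = m + 2 - i by omega, show 1 + i + 1 = i + 2 by omega,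
        show (1 + i : ℕ) = i + 1 by omega] at *
      rw [hcdef]
      simp only
      rw [← hcast]
      field_simp
    rw [Finset.sum_congr rfl hterm, ← Finset.mul_sum] at H
    -- now H : a (m+4) = (-1)^(m+3) * (m+3)! * ζ(m+4) + (m+3)! * ∑ ...
    have hLHS : ((m + 3 : ℕ) : ℝ) * c (m + 3 + 1) + c (m + 3 + 1) = a (m + 4) / ((m + 3).factorial : ℝ) := by
      rw [hcdef]
      simp only
      rw [show (m + 3 + 1 : ℕ) = m + 4 by omega, show ((m+4).factorial : ℕ) = (m+4) * (m+3).factorial from rfl]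
      push_cast
      field_simp
      ring
    have hRHS : ∑ i ∈ range (m + 3 + 1), b i * c (m + 3 - i)
        = (∑ i ∈ range (m + 1), (-1 : ℝ) ^ (i + 1) * zetaNat (i + 2) * c (m + 2 - i))
          + (-1 : ℝ) ^ (m + 3) * zetaNat (m + 4) := by
      rw [Finset.sum_range_succ, Finset.sum_range_succ, Finset.sum_range_succ']
      rw [show m + 3 - (m + 3) = 0 by omega, show m + 3 - (m + 2) = 1 by omega, hc0, hc1]
      simp only [hbdef]
      rw [if_neg (by omega : m + 3 ≠ 0)]
      have hin : ∀ i ∈ range (m + 1),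
          (if i + 1 = 0 then (0:ℝ) else (-1:ℝ)^(i+1) * zetaNat (i+1+1)) * c (m + 3 - (i + 1))
          = (-1 : ℝ) ^ (i + 1) * zetaNat (i + 2) * c (m + 2 - i) := by
        intro i hi
        rw [if_neg (by omega : i + 1 ≠ 0), show m + 3 - (i + 1) = m + 2 - i by omega,
          show i + 1 + 1 = i + 2 by omega]
      rw [Finset.sum_congr rfl hin]
      simp
    rw [hRHS]
    push_cast
    rw [add_mul, one_mul]
    push_cast at hLHS
    rw [hLHS, H]
    field_simp
    ring

private lemma aux_bound (c b : ℕ → ℝ)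
    (hc0 : c 0 = 1) (hc1 : c 1 = 0)
    (hb_abs : ∀ j, |b j| ≤ 2)
    (hrec : ∀ n : ℕ, ((n : ℝ) + 1) * c (n + 1) = ∑ i ∈ range (n + 1), b i * c (n - i)) :
    ∀ k : ℕ, |c k| ≤ ((k : ℝ) + 1) ^ 2 := by
  intro k
  induction k using Nat.strong_induction_on with
  | _ k ih =>
    match k with
    | 0 => simp [hc0]
    | 1 => rw [hc1]; norm_num
    | (n + 2) =>
      have e1 := hrec (n + 1)
      have habs : (((n : ℝ) + 1) + 1) * |c (n + 2)| ≤ 2 * ((((n : ℝ) + 2) + 1) ^ 3 / 3) := by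
        have h1 : (((n : ℝ) + 1) + 1) * |c (n + 2)| = |(((n + 1 : ℕ) : ℝ) + 1) * c (n + 1 + 1)| := by
          rw [abs_mul]
          push_cast
          rw [abs_of_nonneg (by positivity : (0:ℝ) ≤ (n : ℝ) + 1 + 1)]
        rw [h1, e1]
        calc |∑ i ∈ range (n + 1 + 1), b i * c (n + 1 - i)|
            ≤ ∑ i ∈ range (n + 2), |b i * c (n + 1 - i)| := Finset.abs_sum_le_sum_abs _ _
          _ ≤ ∑ i ∈ range (n + 2), 2 * (((n + 1 - i : ℕ) : ℝ) + 1) ^ 2 := by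
              apply Finset.sum_le_sum
              intro i hi
              rw [abs_mul]
              have hlt : n + 1 - i < n + 2 := by omega
              exact mul_le_mul (hb_abs i) (ih _ hlt) (abs_nonneg _) (by norm_num)
          _ = ∑ j ∈ range (n + 2), 2 * (((j : ℕ) : ℝ) + 1) ^ 2 := by
              rw [← Finset.sum_range_reflect (fun j => 2 * (((j : ℕ) : ℝ) + 1) ^ 2) (n + 2)]
              apply Finset.sum_congr rfl
              intro i hi
              norm_num
          _ = 2 * ∑ j ∈ range (n + 2), ((j : ℝ) + 1) ^ 2 := by rw [Finset.mul_sum]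
          _ ≤ 2 * ((((n + 2 : ℕ) : ℝ) + 1) ^ 3 / 3) := by
              have := sum_sq_le (n + 2)
              nlinarith [this]
          _ = 2 * ((((n : ℝ) + 2) + 1) ^ 3 / 3) := by push_cast; ring
      have hnn : (0:ℝ) ≤ |c (n + 2)| := abs_nonneg _
      have hc : ((n:ℝ) + 2 + 1) ^ 2 ≥ 0 := by positivity
      push_cast
      nlinarith [habs, hnn, Nat.cast_nonneg (α := ℝ) n]

private lemma aux_main (z : ℝ) (hz : |z| < 1) (c b : ℕ → ℝ)
    (hc0 : c 0 = 1)
    (hb0 : b 0 = 0) (hbs : ∀ m : ℕ, b (m + 1) = (-1 : ℝ) ^ (m + 1) * zetaNat (m + 2))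
    (hb_abs : ∀ j, |b j| ≤ 2)
    (hbound : ∀ k : ℕ, |c k| ≤ ((k : ℝ) + 1) ^ 2)
    (hzeta_abs : ∀ m : ℕ, 2 ≤ m → |zetaNat m| ≤ 2)
    (hrec : ∀ n : ℕ, ((n : ℝ) + 1) * c (n + 1) = ∑ i ∈ range (n + 1), b i * c (n - i)) :
    (∑' k : ℕ, c k * z ^ k)
      = Real.exp (∑' m : ℕ,
          (-1 : ℝ) ^ (m + 1) * zetaNat (m + 2) / ((m + 2 : ℕ) : ℝ) * z ^ (m + 2)) := by
  classical
  set r : ℝ := (1 + |z|) / 2 with hrdef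
  have habsz : 0 ≤ |z| := abs_nonneg z
  have hr0 : 0 < r := by rw [hrdef]; linarith
  have hr1 : r < 1 := by rw [hrdef]; linarith
  have hzr : |z| < r := by rw [hrdef]; linarith
  have hr2 : 1 ≤ 2 * r := by rw [hrdef]; linarith
  have hrn : ‖r‖ < 1 := by rw [Real.norm_eq_abs, abs_of_pos hr0]; exact hr1
  have hgeo : Summable (fun k : ℕ => r ^ k) := summable_geometric_of_lt_one hr0.le hr1
  have hsum3 : Summable (fun k : ℕ => ((k : ℝ) + 1) ^ 3 * r ^ k) := by
    have h := summable_pow_mul_geometric_of_norm_lt_one 3 hrn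
    have h2 := (summable_nat_add_iff 1).mpr h
    have h3 := h2.mul_left r⁻¹
    apply h3.congr
    intro n
    push_cast
    field_simp
    ring
  -- the master derivative bound series
  have hu : Summable (fun k : ℕ => 2 * (((k : ℝ) + 1) ^ 3 * r ^ k)) := hsum3.mul_left 2
  -- summability of the coefficient series on the closed ball of radius r
  have hcsum : ∀ y : ℝ, |y| ≤ r → Summable (fun k : ℕ => ‖c k * y ^ k‖) := by
    intro y hy
    apply Summable.of_nonneg_of_le (fun k => norm_nonneg _) _ (hsum3.mul_left 1)
    intro k
    rw [norm_mul, norm_pow, Real.norm_eq_abs, Real.norm_eq_abs]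
    have h1 : |y| ^ k ≤ r ^ k := pow_le_pow_left₀ (abs_nonneg y) hy k
    have h2 : |c k| ≤ ((k : ℝ) + 1) ^ 2 := hbound k
    have h3 : ((k : ℝ) + 1) ^ 2 ≤ ((k : ℝ) + 1) ^ 3 := by
      apply pow_le_pow_right₀ (by linarith [Nat.cast_nonneg (α := ℝ) k]) (by norm_num)
    calc |c k| * |y| ^ k ≤ ((k : ℝ) + 1) ^ 3 * r ^ k := by
          apply mul_le_mul (h2.trans h3) h1 (by positivity) (by positivity)
      _ = 1 * (((k : ℝ) + 1) ^ 3 * r ^ k) := by ring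
  have hbsum : ∀ y : ℝ, |y| ≤ r → Summable (fun j : ℕ => ‖b j * y ^ j‖) := by
    intro y hy
    apply Summable.of_nonneg_of_le (fun k => norm_nonneg _) _ (hgeo.mul_left 2)
    intro j
    rw [norm_mul, norm_pow, Real.norm_eq_abs, Real.norm_eq_abs]
    have h1 : |y| ^ j ≤ r ^ j := pow_le_pow_left₀ (abs_nonneg y) hy j
    exact mul_le_mul (hb_abs j) h1 (by positivity) (by norm_num)
  -- derivative of F
  have hFder : ∀ y ∈ Metric.ball (0 : ℝ) r,
      HasDerivAt (fun x : ℝ => ∑' k : ℕ, c k * x ^ k)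
        (∑' k : ℕ, c k * ((k : ℝ) * y ^ (k - 1))) y := by
    intro y hy
    refine hasDerivAt_tsum_of_isPreconnected hu Metric.isOpen_ball
      (convex_ball (0 : ℝ) r).isPreconnected
      (fun k x _ => HasDerivAt.const_mul (c k) (hasDerivAt_pow k x))
      (fun k x hx => ?_) (Metric.mem_ball_self hr0) ?_ hy
    · have hxr : |x| < r := by
        simpa [Metric.mem_ball, Real.dist_eq] using hx
      rw [Real.norm_eq_abs, abs_mul, abs_mul, abs_pow, Nat.abs_cast]
      match k with
      | 0 => simp
      | (k + 1) =>
        have h1 : |x| ^ (k + 1 - 1) ≤ r ^ k := by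
          simpa using pow_le_pow_left₀ (abs_nonneg x) hxr.le k
        have h2 : |c (k + 1)| ≤ ((k : ℝ) + 2) ^ 2 := by
          have := hbound (k + 1); push_cast at this ⊢; linarith
        have h3 : r ^ k ≤ 2 * r ^ (k + 1) := by
          calc r ^ k = r ^ k * 1 := by ring
            _ ≤ r ^ k * (2 * r) := by
                apply mul_le_mul_of_nonneg_left hr2 (by positivity)
            _ = 2 * r ^ (k + 1) := by ring
        have hnn : (0:ℝ) ≤ (k:ℝ) + 1 := by positivity
        calc |c (k + 1)| * (((k + 1 : ℕ) : ℝ) * |x| ^ (k + 1 - 1))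
            ≤ ((k : ℝ) + 2) ^ 2 * (((k : ℝ) + 1) * (2 * r ^ (k + 1))) := by
              push_cast
              apply mul_le_mul h2 _ (by positivity) (by positivity)
              apply mul_le_mul le_rfl (h1.trans h3) (by positivity) hnn
          _ ≤ 2 * ((((k + 1 : ℕ) : ℝ) + 1) ^ 3 * r ^ (k + 1)) := by
              push_cast
              have hrp : (0:ℝ) ≤ r ^ (k + 1) := by positivity
              nlinarith [hrp, Nat.cast_nonneg (α := ℝ) k]
    · apply summable_of_ne_finset_zero (s := ({0} : Finset ℕ))
      intro k hk
      have : k ≠ 0 := by simpa using hk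
      simp [zero_pow this]
  -- derivative of G
  have hGder : ∀ y ∈ Metric.ball (0 : ℝ) r,
      HasDerivAt (fun x : ℝ => ∑' m : ℕ,
          (-1 : ℝ) ^ (m + 1) * zetaNat (m + 2) / ((m + 2 : ℕ) : ℝ) * x ^ (m + 2))
        (∑' m : ℕ, (-1 : ℝ) ^ (m + 1) * zetaNat (m + 2) / ((m + 2 : ℕ) : ℝ)
            * (((m + 2 : ℕ) : ℝ) * y ^ (m + 2 - 1))) y := by
    intro y hy
    refine hasDerivAt_tsum_of_isPreconnected (hgeo.mul_left 2) Metric.isOpen_ball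
      (convex_ball (0 : ℝ) r).isPreconnected
      (fun m x _ => HasDerivAt.const_mul _ (hasDerivAt_pow (m + 2) x))
      (fun m x hx => ?_) (Metric.mem_ball_self hr0) ?_ hy
    · have hxr : |x| < r := by
        simpa [Metric.mem_ball, Real.dist_eq] using hx
      have hm2 : ((m + 2 : ℕ) : ℝ) ≠ 0 := by positivity
      rw [Real.norm_eq_abs, abs_mul, abs_mul, abs_pow, Nat.abs_cast, abs_div, Nat.abs_cast,
        abs_mul, abs_pow, abs_neg, abs_one, one_pow, one_mul]
      have hza : |zetaNat (m + 2)| ≤ 2 := hzeta_abs (m + 2) (by omega)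
      have h1 : |x| ^ (m + 2 - 1) ≤ r ^ (m + 1) := by
        simpa using pow_le_pow_left₀ (abs_nonneg x) hxr.le (m + 1)
      have h2 : r ^ (m + 1) ≤ r ^ m := by
        apply pow_le_pow_of_le_one hr0.le hr1.le (by omega)
      calc |zetaNat (m + 2)| / ((m + 2 : ℕ) : ℝ) * (((m + 2 : ℕ) : ℝ) * |x| ^ (m + 2 - 1))
          = |zetaNat (m + 2)| * |x| ^ (m + 2 - 1) := by field_simp
        _ ≤ 2 * r ^ m := by
            apply mul_le_mul hza (h1.trans h2) (by positivity) (by norm_num)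
    · apply Summable.congr summable_zero
      intro m
      simp [zero_pow (show m + 2 ≠ 0 by omega)]
  -- identify the derivative of G with the series B
  have hGder' : ∀ y ∈ Metric.ball (0 : ℝ) r,
      HasDerivAt (fun x : ℝ => ∑' m : ℕ,
          (-1 : ℝ) ^ (m + 1) * zetaNat (m + 2) / ((m + 2 : ℕ) : ℝ) * x ^ (m + 2))
        (∑' m : ℕ, (-1 : ℝ) ^ (m + 1) * zetaNat (m + 2) * y ^ (m + 1)) y := by
    intro y hy
    have h := hGder y hy
    have he : (∑' m : ℕ, (-1 : ℝ) ^ (m + 1) * zetaNat (m + 2) / ((m + 2 : ℕ) : ℝ)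
        * (((m + 2 : ℕ) : ℝ) * y ^ (m + 2 - 1)))
        = ∑' m : ℕ, (-1 : ℝ) ^ (m + 1) * zetaNat (m + 2) * y ^ (m + 1) := by
      apply tsum_congr
      intro m
      have hm2 : ((m + 2 : ℕ) : ℝ) ≠ 0 := by positivity
      rw [show m + 2 - 1 = m + 1 by omega]
      field_simp
    rwa [he] at h
  -- the ODE : F' = B * F on the ball
  have hODE : ∀ y : ℝ, |y| ≤ r →
      (∑' k : ℕ, c k * ((k : ℝ) * y ^ (k - 1)))
        = (∑' m : ℕ, (-1 : ℝ) ^ (m + 1) * zetaNat (m + 2) * y ^ (m + 1))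
          * (∑' k : ℕ, c k * y ^ k) := by
    intro y hy
    have hbnorm := hbsum y hy
    have hcnorm := hcsum y hy
    -- B y as a tsum over b
    have hB : (∑' j : ℕ, b j * y ^ j)
        = ∑' m : ℕ, (-1 : ℝ) ^ (m + 1) * zetaNat (m + 2) * y ^ (m + 1) := by
      rw [Summable.tsum_eq_zero_add hbnorm.of_norm]
      simp only [hb0, zero_mul, zero_add]
      apply tsum_congr
      intro m
      rw [hbs m]
    rw [← hB]
    -- Cauchy product
    rw [tsum_mul_tsum_eq_tsum_sum_antidiagonal_of_summable_norm hbnorm hcnorm]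
    -- summability of derivative-term series
    have hder_sum : Summable (fun k : ℕ => c k * ((k : ℝ) * y ^ (k - 1))) := by
      apply Summable.of_norm
      apply Summable.of_nonneg_of_le (fun k => norm_nonneg _) _ hu
      intro k
      rw [Real.norm_eq_abs, abs_mul, abs_mul, abs_pow, Nat.abs_cast]
      match k with
      | 0 => simp
      | (k + 1) =>
        have h1 : |y| ^ (k + 1 - 1) ≤ r ^ k := by
          simpa using pow_le_pow_left₀ (abs_nonneg y) hy k
        have h2 : |c (k + 1)| ≤ ((k : ℝ) + 2) ^ 2 := by
          have := hbound (k + 1); push_cast at this ⊢; linarith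
        have h3 : r ^ k ≤ 2 * r ^ (k + 1) := by
          calc r ^ k = r ^ k * 1 := by ring
            _ ≤ r ^ k * (2 * r) := by
                apply mul_le_mul_of_nonneg_left hr2 (by positivity)
            _ = 2 * r ^ (k + 1) := by ring
        calc |c (k + 1)| * (((k + 1 : ℕ) : ℝ) * |y| ^ (k + 1 - 1))
            ≤ ((k : ℝ) + 2) ^ 2 * (((k : ℝ) + 1) * (2 * r ^ (k + 1))) := by
              push_cast
              apply mul_le_mul h2 _ (by positivity) (by positivity)
              apply mul_le_mul le_rfl (h1.trans h3) (by positivity) (by positivity)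
          _ ≤ 2 * ((((k + 1 : ℕ) : ℝ) + 1) ^ 3 * r ^ (k + 1)) := by
              push_cast
              have hrp : (0:ℝ) ≤ r ^ (k + 1) := by positivity
              nlinarith [hrp, Nat.cast_nonneg (α := ℝ) k]
    rw [Summable.tsum_eq_zero_add hder_sum]
    simp only [Nat.cast_zero, zero_mul, mul_zero, zero_add]
    apply tsum_congr
    intro n
    rw [Finset.Nat.sum_antidiagonal_eq_sum_range_succ_mk]
    have hterm : ∀ i ∈ range (n + 1),
        b i * y ^ i * (c (n - i) * y ^ (n - i)) = b i * c (n - i) * y ^ n := by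
      intro i hi
      have hin : i ≤ n := Nat.lt_succ_iff.mp (Finset.mem_range.mp hi)
      have hp : y ^ i * y ^ (n - i) = y ^ n := by
        rw [← pow_add]; congr 1; omega
      calc b i * y ^ i * (c (n - i) * y ^ (n - i))
          = b i * c (n - i) * (y ^ i * y ^ (n - i)) := by ring
        _ = b i * c (n - i) * y ^ n := by rw [hp]
    rw [Finset.sum_congr rfl hterm, ← Finset.sum_mul, ← hrec n]
    push_cast
    ring
  -- the function F * exp (-G) has zero derivative on the ball
  set F : ℝ → ℝ := fun x => ∑' k : ℕ, c k * x ^ k with hFdef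
  set G : ℝ → ℝ := fun x => ∑' m : ℕ,
      (-1 : ℝ) ^ (m + 1) * zetaNat (m + 2) / ((m + 2 : ℕ) : ℝ) * x ^ (m + 2) with hGdef
  have hkey : ∀ y ∈ Metric.ball (0 : ℝ) r,
      HasDerivAt (fun x => F x * Real.exp (-(G x))) 0 y := by
    intro y hy
    have hyr : |y| < r := by simpa [Metric.mem_ball, Real.dist_eq] using hy
    have h1 := hFder y hy
    have h2 := hGder' y hy
    have h3 : HasDerivAt (fun x => Real.exp (-(G x)))
        (Real.exp (-(G y)) * (-(∑' m : ℕ, (-1 : ℝ) ^ (m + 1) * zetaNat (m + 2) * y ^ (m + 1)))) y :=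
      (h2.neg).exp
    have h4 := h1.mul h3
    have : (∑' k : ℕ, c k * ((k : ℝ) * y ^ (k - 1))) * Real.exp (-(G y))
        + F y * (Real.exp (-(G y)) *
            (-(∑' m : ℕ, (-1 : ℝ) ^ (m + 1) * zetaNat (m + 2) * y ^ (m + 1)))) = 0 := by
      rw [hODE y hyr.le]
      simp only [hFdef]
      ring
    rwa [this] at h4
  -- constancy on the ball
  have h0mem : (0 : ℝ) ∈ Metric.ball (0 : ℝ) r := Metric.mem_ball_self hr0
  have hzmem : z ∈ Metric.ball (0 : ℝ) r := by
    simp [Metric.mem_ball, Real.dist_eq, hzr]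
  have hconst : F z * Real.exp (-(G z)) = F 0 * Real.exp (-(G 0)) := by
    apply (convex_ball (0 : ℝ) r).is_const_of_fderivWithin_eq_zero
      (fun y hy => ((hkey y hy).differentiableAt).differentiableWithinAt)
      (fun y hy => ?_) hzmem h0mem
    rw [fderivWithin_of_isOpen Metric.isOpen_ball hy]
    have := (hkey y hy).hasFDerivAt.fderiv
    rw [this]
    ext
    simp
  have hF0 : F 0 = 1 := by
    rw [hFdef]
    simp only
    rw [tsum_eq_single 0 (fun k hk => by simp [zero_pow hk])]
    simp [hc0]
  have hG0 : G 0 = 0 := by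
    rw [hGdef]
    simp only
    have hzz : ∀ m : ℕ, (-1 : ℝ) ^ (m + 1) * zetaNat (m + 2) / ((m + 2 : ℕ) : ℝ) * (0:ℝ) ^ (m + 2) = 0 :=
      fun m => by rw [zero_pow (by omega : m + 2 ≠ 0), mul_zero]
    rw [tsum_congr hzz, tsum_zero]
  rw [hF0, hG0] at hconst
  simp at hconst
  -- conclude
  have : F z = Real.exp (G z) := by
    have he : Real.exp (-(G z)) = (Real.exp (G z))⁻¹ := by rw [Real.exp_neg]
    rw [he] at hconst
    field_simp at hconst
    linarith [hconst]
  exact this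


/-- Generating function of the recursive sequence `a_k`: if `a_0 = 1`, `a_1 = 0`,
`a_2 = -ζ(2)`, `a_3 = 2ζ(3)` and, for `k ≥ 4`,
`a_k = (-1)^{k-1}(k-1)! ζ(k) + ∑_{i=1}^{k-3} (-1)^i binom(k-1,i) i! ζ(i+1) a_{k-1-i}`,
then the exponential generating function `A(z) = ∑ a_k z^k / k!` satisfies
`A(z) = exp(∑_{m=2}^∞ (-1)^{m-1} ζ(m) z^m / m)` for `|z| < 1`. -/
theorem a_seq_generating_function (a : ℕ → ℝ)
    (ha0 : a 0 = 1) (ha1 : a 1 = 0) (ha2 : a 2 = -zetaNat 2)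
    (ha3 : a 3 = 2 * zetaNat 3)
    (harec : ∀ k : ℕ, 4 ≤ k →
      a k = (-1 : ℝ) ^ (k - 1) * ((k - 1).factorial : ℝ) * zetaNat k
        + ∑ i ∈ Finset.Icc 1 (k - 3),
            (-1 : ℝ) ^ i * ((k - 1).choose i : ℝ) * (i.factorial : ℝ) *
              zetaNat (i + 1) * a (k - 1 - i)) :
    ∀ z : ℝ, |z| < 1 →
      (∑' k : ℕ, a k / (k.factorial : ℝ) * z ^ k)
        = Real.exp (∑' m : ℕ,
            (-1 : ℝ) ^ (m + 1) * zetaNat (m + 2) / ((m + 2 : ℕ) : ℝ) * z ^ (m + 2)) := by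
  intro z hz
  classical
  let c : ℕ → ℝ := fun k => a k / (k.factorial : ℝ)
  let b : ℕ → ℝ := fun j => if j = 0 then 0 else (-1 : ℝ) ^ j * zetaNat (j + 1)
  have hc0 : c 0 = 1 := by simp [c, ha0]
  have hc1 : c 1 = 0 := by simp [c, ha1]
  have hc2 : c 2 = -zetaNat 2 / 2 := by
    simp [c, ha2, Nat.factorial]
  have hc3 : c 3 = zetaNat 3 / 3 := by
    simp only [c, ha3]
    norm_num [Nat.factorial]
    ring
  have hb0 : b 0 = 0 := by simp [b]
  have hbs : ∀ m : ℕ, b (m + 1) = (-1 : ℝ) ^ (m + 1) * zetaNat (m + 2) := by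
    intro m
    simp only [b]
    rw [if_neg (by omega : m + 1 ≠ 0)]
  have hb_abs : ∀ j, |b j| ≤ 2 := by
    intro j
    rcases Nat.eq_zero_or_pos j with h | h
    · simp [b, h]
    · have hj : j ≠ 0 := h.ne'
      simp only [b, if_neg hj, abs_mul, abs_pow, abs_neg, abs_one, one_pow, one_mul]
      exact zetaNat_abs_le_two (by omega)
  have hrec : ∀ n : ℕ, ((n : ℝ) + 1) * c (n + 1) = ∑ i ∈ range (n + 1), b i * c (n - i) :=
    aux_rec a harec c rfl hc0 hc1 hc2 hc3 b rfl
  have hbound : ∀ k : ℕ, |c k| ≤ ((k : ℝ) + 1) ^ 2 :=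
    aux_bound c b hc0 hc1 hb_abs hrec
  exact aux_main z hz c b hc0 hb0 hbs hb_abs hbound (fun m hm => zetaNat_abs_le_two hm) hrec
end
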